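/- There exists a universal constant c > 0 such that for all integers n ≥ 2, r ≥ 1 and s ≥ 1, there exists a deterministic adaptive membership-query algorithm with query budget ⌈c·(r^{s−1} + r·s·log₂ n)⌉ that exactly learns the class of all s-term r-MDNF functions on {0,1}^n. -/

import Mathlib

/-- The transcript of a deterministic adaptive membership-query algorithm with query map `σ`
run on target `f` for `m` queries: the list `(b₁, …, b_m)` with `b_i = f (σ (b₁, …, b_{i-1}))`. -/
def transcript {n : ℕ} (σ : List Bool → (Fin n → Bool)) (f : (Fin n → Bool) → Bool) :
    ℕ → List Bool
  | 0 => []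
  | m + 1 => transcript σ f m ++ [f (σ (transcript σ f m))]

/-- `f : {0,1}^n → {0,1}` is an `s`-term `r`-MDNF if there are `p ≤ s` nonempty subsets
`T₁, …, T_p` of the coordinates, each of size at most `r`, such that `f a = 1` iff
for some `i` all coordinates of `a` indexed by `T i` equal `1`. -/
def IsMDNF (n s r : ℕ) (f : (Fin n → Bool) → Bool) : Prop :=
  ∃ (p : ℕ) (T : Fin p → Finset (Fin n)), p ≤ s ∧
    (∀ i, (T i).Nonempty ∧ (T i).card ≤ r) ∧
    ∀ a : Fin n → Bool, f a = true ↔ ∃ i, ∀ j ∈ T i, a j = true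

/-!
The minterms of `f` are found one at a time. If `ts` is the set of minterms found so far and `M`
is a missing one, every `T ∈ ts` has a coordinate outside `M`; deleting one such coordinate from
each `T` leaves a set containing `M` but no member of `ts`. There are at most `r ^ #ts` such sets,
so querying all of them either shows, by monotonicity, that `ts` is complete, or yields a positive
set `A` all of whose minterms are new.

A minterm inside `A` is extracted by binary searches over the prefixes of `A`. We keep a core `C`
contained in every positive subset of `C ∪ (A below b)`: the least `i ≤ b` with `C ∪ (A below i)`
positive is either `0`, and then `C` is a minterm, or it makes coordinate `i - 1` essential, and
it joins the core. A search costs `log₂ n + 1` queries and the core never exceeds `r`, so the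
total is `∑_{k < s} r ^ k + s (r + 1) (log₂ n + 1) = O(r ^ (s - 1) + r s log₂ n)`.
-/

open Finset

-- Adaptive query algorithms as decision trees: `node q next` asks `q` and continues with
-- `next` applied to the answer; `exists_transcript_learner` recovers the `σ`/`out` form.
inductive QueryTree (Q α : Type) : Type
  | leaf (a : α)
  | node (q : Q) (next : Bool → QueryTree Q α)

namespace QueryTree

variable {Q α β : Type}

def eval (f : Q → Bool) : QueryTree Q α → α
  | leaf a => a
  | node q next => eval f (next (f q))

def cost (f : Q → Bool) : QueryTree Q α → ℕ
  | leaf _ => 0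
  | node q next => cost f (next (f q)) + 1

def bind : QueryTree Q α → (α → QueryTree Q β) → QueryTree Q β
  | leaf a, k => k a
  | node q next, k => node q fun b => bind (next b) k

instance : Monad (QueryTree Q) where
  pure := leaf
  bind := bind

variable (f : Q → Bool)

@[simp] lemma eval_pure (a : α) : eval f (pure a : QueryTree Q α) = a := rfl

@[simp] lemma cost_pure (a : α) : cost f (pure a : QueryTree Q α) = 0 := rfl

@[simp] lemma eval_bind (t : QueryTree Q α) (k : α → QueryTree Q β) :
    eval f (t >>= k) = eval f (k (eval f t)) := by
  induction t with
  | leaf a => rfl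
  | node q next ih => exact ih (f q)

@[simp] lemma cost_bind (t : QueryTree Q α) (k : α → QueryTree Q β) :
    cost f (t >>= k) = cost f t + cost f (k (eval f t)) := by
  induction t with
  | leaf a => exact (zero_add _).symm
  | node q next ih =>
    change cost f (next (f q) >>= k) + 1 =
      cost f (next (f q)) + 1 + cost f (k (eval f (next (f q))))
    rw [ih]
    omega

def step : QueryTree Q α → Bool → QueryTree Q α
  | leaf a, _ => leaf a
  | node _ next, b => next b

def query [Inhabited Q] : QueryTree Q α → Q
  | leaf _ => default
  | node q _ => q

def result [Inhabited α] : QueryTree Q α → α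
  | leaf a => a
  | node _ _ => default

lemma iterate_step_of_cost_le [Inhabited Q] (t : QueryTree Q α) {m : ℕ} (hm : cost f t ≤ m) :
    (fun u => step u (f (query u)))^[m] t = leaf (eval f t) := by
  induction t generalizing m with
  | leaf a => exact Function.iterate_fixed rfl m
  | node q next ih =>
    cases m with
    | zero => simp [cost] at hm
    | succ m =>
      rw [Function.iterate_succ_apply]
      exact ih (f q) (by simpa [cost] using hm)

lemma foldl_step_transcript {n : ℕ} (t : QueryTree (Fin n → Bool) α)
    (f : (Fin n → Bool) → Bool) (m : ℕ) :
    (transcript (fun bs => (bs.foldl step t).query) f m).foldl step t =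
      (fun u => step u (f (query u)))^[m] t := by
  induction m with
  | zero => rfl
  | succ m ih => rw [transcript, List.foldl_append, ih, Function.iterate_succ_apply']; rfl

theorem exists_transcript_learner {n : ℕ} [Inhabited α] (t : QueryTree (Fin n → Bool) α)
    (decode : α → (Fin n → Bool) → Bool) :
    ∃ (σ : List Bool → (Fin n → Bool)) (out : List Bool → ((Fin n → Bool) → Bool)),
      ∀ f m, cost f t ≤ m → out (transcript σ f m) = decode (eval f t) :=
  ⟨fun bs => (bs.foldl step t).query, fun bs => decode (bs.foldl step t).result, fun f m hm => by
    simp only [foldl_step_transcript, iterate_step_of_cost_le f t hm, result]⟩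

def findFirst (q : β → Q) : List β → QueryTree Q (Option β)
  | [] => leaf none
  | x :: xs => node (q x) fun b => if b then leaf (some x) else findFirst q xs

lemma eval_findFirst (q : β → Q) (l : List β) :
    eval f (findFirst q l) = l.find? fun x => f (q x) := by
  induction l with
  | nil => rfl
  | cons x xs ih => cases h : f (q x) <;> simp [findFirst, eval, h, ih]

lemma cost_findFirst_le (q : β → Q) (l : List β) :
    cost f (findFirst q l) ≤ l.length := by
  induction l with
  | nil => exact Nat.zero_le _
  | cons x xs ih => cases h : f (q x) <;> simp [findFirst, cost, h, ih]

def binarySearch (q : ℕ → Q) (lo hi : ℕ) : QueryTree Q ℕ :=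
  if lo < hi then
    node (q ((lo + hi) / 2)) fun b =>
      if b then binarySearch q lo ((lo + hi) / 2) else binarySearch q ((lo + hi) / 2 + 1) hi
  else leaf lo
termination_by hi - lo

variable (q : ℕ → Q)

lemma binarySearch_spec {lo hi : ℕ} (hle : lo ≤ hi) (hhi : f (q hi) = true) :
    eval f (binarySearch q lo hi) ≤ hi ∧ f (q (eval f (binarySearch q lo hi))) = true ∧
      (eval f (binarySearch q lo hi) = lo ∨
        f (q (eval f (binarySearch q lo hi) - 1)) = false) := by
  induction lo, hi using binarySearch.induct with
  | case1 lo hi hlt ih_left ih_right =>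
    rw [binarySearch, if_pos hlt]
    cases hmid : f (q ((lo + hi) / 2))
    · obtain ⟨hle', htrue, hmin⟩ := ih_right (by omega) hhi
      simp only [eval, hmid, Bool.false_eq_true, if_false]
      refine ⟨hle', htrue, Or.inr ?_⟩
      rcases hmin with heq | hfalse
      · rwa [heq, Nat.add_sub_cancel]
      · exact hfalse
    · obtain ⟨hle', htrue, hmin⟩ := ih_left (by omega) hmid
      simp only [eval, hmid, if_true]
      exact ⟨by omega, htrue, hmin⟩
  | case2 lo hi hlt =>
    rw [binarySearch, if_neg hlt]
    obtain rfl : lo = hi := by omega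
    exact ⟨le_rfl, hhi, Or.inl rfl⟩

lemma cost_binarySearch_le {k lo hi : ℕ} (h : hi - lo < 2 ^ k) :
    cost f (binarySearch q lo hi) ≤ k := by
  induction k generalizing lo hi with
  | zero =>
    rw [binarySearch, if_neg (by omega)]
    exact Nat.zero_le _
  | succ k ih =>
    rw [binarySearch]
    split_ifs with hlt
    · simp only [cost]
      rw [pow_succ] at h
      cases f (q ((lo + hi) / 2))
      · simpa using ih (lo := (lo + hi) / 2 + 1) (hi := hi) (by omega)
      · simpa using ih (lo := lo) (hi := (lo + hi) / 2) (by omega)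
    · exact Nat.zero_le _

lemma cost_binarySearch_le_log {n b : ℕ} (hb : b ≤ n) :
    cost f (binarySearch q 0 b) ≤ Nat.log 2 n + 1 :=
  cost_binarySearch_le f q (lt_of_le_of_lt (by omega) (Nat.lt_pow_succ_log_self one_lt_two n))

end QueryTree

open QueryTree

section Minterms

variable {n : ℕ}

def ones (A : Finset (Fin n)) : Fin n → Bool := fun i => decide (i ∈ A)

@[simp] lemma ones_eq_true {A : Finset (Fin n)} {i : Fin n} : ones A i = true ↔ i ∈ A := by
  simp [ones]

lemma ones_filter_eq_true (a : Fin n → Bool) : ones (univ.filter fun i => a i = true) = a := by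
  funext i
  cases h : a i <;> simp [ones, h]

def IsMinterm (f : (Fin n → Bool) → Bool) (M : Finset (Fin n)) : Prop :=
  Minimal (fun A => f (ones A) = true) M

open Classical in
noncomputable def minterms (f : (Fin n → Bool) → Bool) : Finset (Finset (Fin n)) :=
  univ.filter (IsMinterm f)

def dnf (ts : Finset (Finset (Fin n))) (a : Fin n → Bool) : Bool :=
  decide (∃ T ∈ ts, ∀ j ∈ T, a j = true)

variable {f : (Fin n → Bool) → Bool}

@[simp] lemma mem_minterms {M : Finset (Fin n)} : M ∈ minterms f ↔ IsMinterm f M := by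
  simp [minterms]

lemma exists_mem_minterms_subset {A : Finset (Fin n)} (hA : f (ones A) = true) :
    ∃ M ∈ minterms f, M ⊆ A := by
  obtain ⟨M, hMA, hM⟩ := exists_minimal_le_of_wellFoundedLT (fun B => f (ones B) = true) A hA
  exact ⟨M, mem_minterms.mpr hM, hMA⟩

lemma dnf_minterms (hmono : Monotone fun A => f (ones A) = true) : dnf (minterms f) = f := by
  funext a
  rw [← ones_filter_eq_true a, Bool.eq_iff_iff, dnf, decide_eq_true_iff]
  constructor
  · rintro ⟨M, hM, hMa⟩
    exact hmono (fun j hj => by simpa using hMa j hj) (mem_minterms.mp hM).prop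
  · intro ha
    obtain ⟨M, hM, hMa⟩ := exists_mem_minterms_subset ha
    exact ⟨M, hM, fun j hj => by simpa using hMa hj⟩

variable {r s : ℕ}

lemma IsMDNF.monotone (hf : IsMDNF n s r f) : Monotone fun A => f (ones A) = true := by
  obtain ⟨p, T, -, -, hval⟩ := hf
  intro A B hAB hA
  obtain ⟨i, hi⟩ := (hval _).mp hA
  exact (hval _).mpr ⟨i, fun j hj => by simpa using hAB (by simpa using hi j hj)⟩

lemma IsMDNF.card_minterms_le (hf : IsMDNF n s r f) :
    (minterms f).card ≤ s ∧ ∀ M ∈ minterms f, M.card ≤ r := by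
  obtain ⟨p, T, hp, hT, hval⟩ := hf
  have hterm : ∀ A, f (ones A) = true ↔ ∃ i, T i ⊆ A := fun A => by
    simp only [hval, ones_eq_true, subset_iff]
  have hsub : minterms f ⊆ univ.image T := by
    intro M hM
    obtain ⟨i, hi⟩ := (hterm M).mp (mem_minterms.mp hM).prop
    have hTi : f (ones (T i)) = true := (hterm _).mpr ⟨i, le_rfl⟩
    exact mem_image.mpr ⟨i, mem_univ _, le_antisymm hi ((mem_minterms.mp hM).2 hTi hi)⟩
  refine ⟨(card_le_card hsub).trans (card_image_le.trans (by simpa using hp)), fun M hM => ?_⟩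
  obtain ⟨i, -, rfl⟩ := mem_image.mp (hsub hM)
  exact (hT i).2

end Minterms

section Minimize

variable {n : ℕ}

def below (A : Finset (Fin n)) (i : ℕ) : Finset (Fin n) := A.filter fun j => (j : ℕ) < i

lemma below_mono (A : Finset (Fin n)) {i j : ℕ} (h : i ≤ j) : below A i ⊆ below A j :=
  fun x hx => by simp only [below, mem_filter] at hx ⊢; exact ⟨hx.1, by omega⟩

@[simp] lemma below_zero (A : Finset (Fin n)) : below A 0 = ∅ := by
  ext; simp [below]

@[simp] lemma below_self (A : Finset (Fin n)) : below A n = A := by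
  ext j; simp [below]

-- `k` is fuel for the number of rounds; `A.filter (· = i - 1)` is the singleton of the
-- coordinate that the round found essential.
def minimize (A : Finset (Fin n)) :
    ℕ → Finset (Fin n) → ℕ → QueryTree (Fin n → Bool) (Finset (Fin n))
  | 0, C, _ => pure C
  | k + 1, C, b => do
    let i ← binarySearch (fun i => ones (C ∪ below A i)) 0 b
    if i = 0 then pure C else minimize A k (C ∪ A.filter fun j => (j : ℕ) = i - 1) (i - 1)

lemma union_filter_union_below (A C : Finset (Fin n)) {i : ℕ} (hi : 0 < i) :
    (C ∪ A.filter fun j => (j : ℕ) = i - 1) ∪ below A (i - 1) = C ∪ below A i := by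
  ext j
  simp only [below, mem_union, mem_filter]
  grind

def IsCore (f : (Fin n → Bool) → Bool) (A C : Finset (Fin n)) (b : ℕ) : Prop :=
  f (ones (C ∪ below A b)) = true ∧ ∀ B ⊆ C ∪ below A b, f (ones B) = true → C ⊆ B

variable {f : (Fin n → Bool) → Bool} {A C : Finset (Fin n)} {b r : ℕ}

lemma IsCore.card_le (hcard : ∀ M ∈ minterms f, M.card ≤ r) (hC : IsCore f A C b) :
    C.card ≤ r := by
  obtain ⟨M, hM, hMsub⟩ := exists_mem_minterms_subset hC.1
  exact (card_le_card (hC.2 M hMsub (mem_minterms.mp hM).prop)).trans (hcard M hM)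

lemma IsCore.isMinterm (hC : IsCore f A C b) (hCtrue : f (ones C) = true) : IsMinterm f C :=
  ⟨hCtrue, fun B hB hBC => hC.2 B (hBC.trans subset_union_left) hB⟩

lemma IsCore.next (hmono : Monotone fun A => f (ones A) = true) (hC : IsCore f A C b)
    {i : ℕ} (hi : 0 < i) (hib : i ≤ b) (htrue : f (ones (C ∪ below A i)) = true)
    (hfalse : f (ones (C ∪ below A (i - 1))) = false) :
    IsCore f A (C ∪ A.filter fun j => (j : ℕ) = i - 1) (i - 1) ∧
      C.card < (C ∪ A.filter fun j => (j : ℕ) = i - 1).card := by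
  have hsplit := union_filter_union_below A C hi
  refine ⟨⟨hsplit ▸ htrue, fun B hB hBtrue => union_subset ?_ ?_⟩,
    card_lt_card ⟨subset_union_left, fun hsub => ?_⟩⟩
  · exact hC.2 B ((hsplit ▸ hB).trans (union_subset_union le_rfl (below_mono A hib))) hBtrue
  · intro x hx
    by_contra hxB
    have hBsub : B ⊆ C ∪ below A (i - 1) := by
      intro y hy
      have hy' := (hsplit ▸ hB) hy
      have hyx : (y : ℕ) ≠ x := fun h => hxB (Fin.ext h ▸ hy)
      simp only [below, mem_union, mem_filter] at hy' hx ⊢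
      rcases hy' with hyC | ⟨hyA, hyi⟩
      · exact Or.inl hyC
      · exact Or.inr ⟨hyA, by omega⟩
    simp [hmono hBsub hBtrue] at hfalse
  · rw [subset_antisymm hsub subset_union_left] at hsplit
    simp [hsplit, htrue] at hfalse

lemma minimize_spec (hmono : Monotone fun A => f (ones A) = true)
    (hcard : ∀ M ∈ minterms f, M.card ≤ r) :
    ∀ (k : ℕ) (C : Finset (Fin n)) (b : ℕ), b ≤ n → IsCore f A C b → r < C.card + k →
      IsMinterm f (eval f (minimize A k C b)) ∧ eval f (minimize A k C b) ⊆ C ∪ below A b ∧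
        cost f (minimize A k C b) ≤ k * (Nat.log 2 n + 1)
  | 0, C, b, _, hC, hk => absurd (hC.card_le hcard) (by omega)
  | k + 1, C, b, hb, hC, hk => by
    simp only [minimize, eval_bind, cost_bind]
    obtain ⟨hib, htrue, hmin⟩ :=
      binarySearch_spec f (fun i => ones (C ∪ below A i)) (Nat.zero_le b) hC.1
    have hcost := cost_binarySearch_le_log f (fun i => ones (C ∪ below A i)) hb
    generalize eval f (binarySearch (fun i => ones (C ∪ below A i)) 0 b) = i at hib htrue hmin ⊢
    rw [add_one_mul]
    by_cases hi : i = 0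
    · subst hi
      simp only [if_true, eval_pure, cost_pure, below_zero, union_empty] at htrue ⊢
      exact ⟨hC.isMinterm htrue, subset_union_left, by omega⟩
    · obtain ⟨hC', hcard_lt⟩ :=
        hC.next hmono (Nat.pos_of_ne_zero hi) hib htrue (hmin.resolve_left hi)
      obtain ⟨hM, hsub, hcost'⟩ :=
        minimize_spec hmono hcard k _ (i - 1) (by omega) hC' (by omega)
      rw [if_neg hi]
      refine ⟨hM, fun x hx => ?_, by omega⟩
      have hx' := union_filter_union_below A C (Nat.pos_of_ne_zero hi) ▸ hsub hx
      exact union_subset_union le_rfl (below_mono A hib) hx'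

end Minimize

section Learner

variable {n : ℕ}

noncomputable def avoiders (ts : Finset (Finset (Fin n))) : Finset (Finset (Fin n)) :=
  (Fintype.piFinset fun T : ts => (T : Finset (Fin n))).image fun z => univ \ univ.image z

lemma not_subset_of_mem_avoiders {ts : Finset (Finset (Fin n))} {A T : Finset (Fin n)}
    (hA : A ∈ avoiders ts) (hT : T ∈ ts) : ¬ T ⊆ A := by
  obtain ⟨z, hz, rfl⟩ := mem_image.mp hA
  intro hsub
  have := hsub (Fintype.mem_piFinset.mp hz ⟨T, hT⟩)
  simp at this

lemma exists_mem_avoiders_superset {ts : Finset (Finset (Fin n))} {M : Finset (Fin n)}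
    (hM : ∀ T ∈ ts, ¬ T ⊆ M) : ∃ A ∈ avoiders ts, M ⊆ A := by
  choose z hzT hzM using fun T : ts => not_subset.mp (hM T T.2)
  refine ⟨_, mem_image.mpr ⟨z, Fintype.mem_piFinset.mpr hzT, rfl⟩, fun x hx => ?_⟩
  simp only [mem_sdiff, mem_univ, mem_image, true_and, not_exists]
  exact fun T hxT => hzM T (hxT ▸ hx)

lemma card_avoiders_le {ts : Finset (Finset (Fin n))} {r : ℕ} (hts : ∀ T ∈ ts, T.card ≤ r) :
    (avoiders ts).card ≤ r ^ ts.card := by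
  refine card_image_le.trans ?_
  rw [Fintype.card_piFinset]
  simpa using prod_le_pow_card univ (fun T : ts => (T : Finset (Fin n)).card) r
    fun T _ => hts T T.2

noncomputable def learnTerms (r : ℕ) :
    ℕ → Finset (Finset (Fin n)) → QueryTree (Fin n → Bool) (Finset (Finset (Fin n)))
  | 0, ts => pure ts
  | k + 1, ts => do
    match ← findFirst ones (avoiders ts).toList with
    | none => pure ts
    | some A =>
      let M ← minimize A (r + 1) ∅ n
      learnTerms r k (insert M ts)

variable {f : (Fin n → Bool) → Bool} {r s : ℕ}

lemma minterms_subset_of_avoiders (hmono : Monotone fun A => f (ones A) = true)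
    {ts : Finset (Finset (Fin n))} (hts : ts ⊆ minterms f)
    (hfalse : ∀ A ∈ avoiders ts, f (ones A) = false) : minterms f ⊆ ts := by
  intro M hM
  by_contra hMts
  have hfree : ∀ T ∈ ts, ¬ T ⊆ M := fun T hT hTM =>
    hMts (le_antisymm hTM ((mem_minterms.mp hM).2 (mem_minterms.mp (hts hT)).prop hTM) ▸ hT)
  obtain ⟨A, hA, hMA⟩ := exists_mem_avoiders_superset hfree
  simpa [hmono hMA (mem_minterms.mp hM).prop] using hfalse A hA

lemma learnTerms_spec_of_monotone (hmono : Monotone fun A => f (ones A) = true)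
    (hcard : ∀ M ∈ minterms f, M.card ≤ r) (hnum : (minterms f).card ≤ s) :
    ∀ (k : ℕ) (ts : Finset (Finset (Fin n))), ts ⊆ minterms f → s ≤ ts.card + k →
      eval f (learnTerms r k ts) = minterms f ∧
        cost f (learnTerms r k ts) ≤
          ∑ j ∈ range k, (r ^ (ts.card + j) + (r + 1) * (Nat.log 2 n + 1))
  | 0, ts, hts, hk => ⟨eq_of_subset_of_card_le hts (hnum.trans hk), Nat.zero_le _⟩
  | k + 1, ts, hts, hk => by
    have hfind := eval_findFirst f ones (avoiders ts).toList
    have hcost := (cost_findFirst_le f ones (avoiders ts).toList).trans_eq (length_toList _)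
    have hcard_av := card_avoiders_le fun T hT => hcard T (hts hT)
    simp only [learnTerms, eval_bind, cost_bind]
    rw [sum_range_succ', add_zero]
    generalize eval f (findFirst ones (avoiders ts).toList) = o at hfind ⊢
    rcases o with _ | A
    · have hall := List.find?_eq_none.mp hfind.symm
      refine ⟨subset_antisymm hts (minterms_subset_of_avoiders hmono hts fun A hA => ?_), ?_⟩
      · simpa using hall A (mem_toList.mpr hA)
      · simp only [cost_pure]
        omega
    · have hA : A ∈ avoiders ts := mem_toList.mp (List.mem_of_find?_eq_some hfind.symm)
      have hcore : IsCore f A ∅ n :=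
        ⟨by simpa using List.find?_some hfind.symm, fun B _ _ => empty_subset B⟩
      obtain ⟨hM, hMA, hcostM⟩ := minimize_spec hmono hcard (r + 1) ∅ n le_rfl hcore (by simp)
      simp only [empty_union, below_self] at hMA
      simp only [eval_bind, cost_bind, ← add_assoc]
      generalize eval f (minimize A (r + 1) ∅ n) = M at hM hMA ⊢
      have hMts : M ∉ ts := fun h => not_subset_of_mem_avoiders hA h hMA
      obtain ⟨heval, hcost'⟩ := learnTerms_spec_of_monotone hmono hcard hnum k (insert M ts)
        (insert_subset (mem_minterms.mpr hM) hts) (by rw [card_insert_of_notMem hMts]; omega)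
      simp only [card_insert_of_notMem hMts, add_right_comm _ 1] at hcost'
      exact ⟨heval, by omega⟩

end Learner

lemma sum_range_pow_le (r s : ℕ) : ∑ j ∈ range s, r ^ j ≤ 2 * r ^ (s - 1) + s := by
  rcases le_or_gt r 1 with hr | hr
  · calc ∑ j ∈ range s, r ^ j ≤ ∑ _j ∈ range s, 1 :=
          sum_le_sum fun j _ => pow_le_one₀ (Nat.zero_le r) hr
      _ ≤ 2 * r ^ (s - 1) + s := by simp
  · have hgeom : ∀ m, ∑ j ∈ range (m + 1), r ^ j ≤ 2 * r ^ m := by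
      intro m
      induction m with
      | zero => simp
      | succ m ih =>
        rw [sum_range_succ, pow_succ]
        nlinarith [Nat.zero_le (r ^ m)]
    cases s with
    | zero => simp
    | succ s => simpa using (hgeom s).trans (Nat.le_add_right _ (s + 1))

lemma cast_budget_le {n r s : ℕ} (hn : 2 ≤ n) (hr : 1 ≤ r) :
    ((2 * r ^ (s - 1) + s + s * ((r + 1) * (Nat.log 2 n + 1)) : ℕ) : ℝ) ≤
      5 * ((r : ℝ) ^ (s - 1) + r * s * Real.logb 2 n) := by
  have hlog : (1 : ℝ) ≤ Nat.log 2 n := by exact_mod_cast Nat.log_pos one_lt_two hn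
  have hlogb : (Nat.log 2 n : ℝ) ≤ Real.logb 2 n := by exact_mod_cast Real.natLog_le_logb n 2
  have hr' : (1 : ℝ) ≤ r := by exact_mod_cast hr
  have hs : (0 : ℝ) ≤ s := Nat.cast_nonneg s
  have hround : ((r : ℝ) + 1) * (Nat.log 2 n + 1) ≤ 4 * (r * Real.logb 2 n) := by nlinarith
  have hterm : (s : ℝ) ≤ s * (r * Real.logb 2 n) :=
    le_mul_of_one_le_right hs (by nlinarith)
  push_cast
  linarith [mul_le_mul_of_nonneg_left hround hs, pow_nonneg (Nat.cast_nonneg (α := ℝ) r) (s - 1)]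

namespace IsMDNF

variable {n r s : ℕ} {f : (Fin n → Bool) → Bool}

lemma learnTerms_spec (hf : IsMDNF n s r f) :
    dnf (eval f (learnTerms r s ∅)) = f ∧
      cost f (learnTerms r s ∅) ≤ 2 * r ^ (s - 1) + s + s * ((r + 1) * (Nat.log 2 n + 1)) := by
  obtain ⟨hnum, hcard⟩ := hf.card_minterms_le
  obtain ⟨heval, hcost⟩ :=
    learnTerms_spec_of_monotone hf.monotone hcard hnum s ∅ (empty_subset _) (by simp)
  refine ⟨heval ▸ dnf_minterms hf.monotone, hcost.trans ?_⟩
  simp only [card_empty, zero_add, sum_add_distrib, sum_const, card_range, smul_eq_mul]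
  linarith [sum_range_pow_le r s]

end IsMDNF

/-- There is a universal constant `c > 0` such that for all `n ≥ 2`, `r ≥ 1` and `s ≥ 1`,
some deterministic adaptive membership-query algorithm with query budget
`⌈c·(r^{s−1} + r·s·log₂ n)⌉` exactly learns the class of all `s`-term `r`-MDNF functions
on `{0,1}^n`. -/
theorem deterministic_upper_bound_exhaustive :
    ∃ c : ℝ, 0 < c ∧ ∀ n r s : ℕ, 2 ≤ n → 1 ≤ r → 1 ≤ s →
      ∃ (σ : List Bool → (Fin n → Bool)) (out : List Bool → ((Fin n → Bool) → Bool)),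
        ∀ f : (Fin n → Bool) → Bool, IsMDNF n s r f →
          out (transcript σ f
            ⌈c * ((r : ℝ) ^ (s - 1) + (r : ℝ) * s * Real.logb 2 n)⌉₊) = f := by
  refine ⟨5, by norm_num, fun n r s hn hr _ => ?_⟩
  obtain ⟨σ, out, hout⟩ := exists_transcript_learner (learnTerms (n := n) r s ∅) dnf
  refine ⟨σ, out, fun f hf => ?_⟩
  obtain ⟨hlearn, hcost⟩ := hf.learnTerms_spec
  refine (hout f _ (hcost.trans ?_)).trans hlearn
  exact Nat.cast_le.mp ((cast_budget_le hn hr).trans (Nat.le_ceil _))
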